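/- arXiv:1402.2362 — 9 statements merged into one kernel-verified Lean document; each statement's English description precedes it below -/
import Mathlib

section
/- For real numbers λ₁,…,λₙ (n>1) and 1 ≤ r ≤ n−1, define H_r = S_r/ C(n,r) where S_r is the r-th elementary symmetric polynomial of the λᵢ. Then H_r² ≥ H_{r−1}·H_{r+1}. -/
/-!
Newton's inequalities are inherited by the roots of the derivative: if `p = ∏ (X - λᵢ)`, Rolle's
theorem shows that `p'` again has only real roots `μ₁, …, μₙ₋₁`, and comparing coefficients gives
`H_j(μ) = H_j(λ)` for `j < n`. This reduces `H_r² ≥ H_{r-1} H_{r+1}` to the top case `r = n - 1`.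
There, passing to the reciprocals `1/λᵢ` (if no `λᵢ` vanishes; otherwise `H_n = 0`) turns the
triple `(H_{n-2}, H_{n-1}, H_n)` into a multiple of `(H_2, H_1, H_0)`, i.e. into the case `r = 1`,
which the derivative again reduces to two variables, where it reads `λ₁λ₂ ≤ ((λ₁ + λ₂)/2)²`.
-/

/-- The `r`-th elementary symmetric polynomial of `v`. -/
noncomputable def esymm (n r : ℕ) (v : Fin n → ℝ) : ℝ :=
  ∑ s ∈ Finset.powersetCard r Finset.univ, ∏ i ∈ s, v i

/-- Normalized symmetric function `H_r = S_r / C(n,r)`. -/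
noncomputable def Hsym (n r : ℕ) (v : Fin n → ℝ) : ℝ :=
  esymm n r v / (n.choose r : ℝ)

open Polynomial

theorem Polynomial.Splits.derivative_of_real {p : ℝ[X]} (hp : p.Splits) : p.derivative.Splits := by
  rw [splits_iff_card_roots] at hp ⊢
  have := card_roots_le_derivative p
  have := card_roots' p.derivative
  rw [natDegree_derivative] at *
  omega

namespace Multiset

section CommSemiring

variable {R : Type*} [CommSemiring R]

@[simp]
theorem esymm_zero (s : Multiset R) : s.esymm 0 = 1 := by
  simp [esymm, powersetCard_zero_left]

theorem esymm_eq_zero_of_card_lt {s : Multiset R} {k : ℕ} (h : card s < k) : s.esymm k = 0 := by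
  simp [esymm, powersetCard_eq_empty k h]

theorem esymm_cons_succ (a : R) (s : Multiset R) (k : ℕ) :
    (a ::ₘ s).esymm (k + 1) = s.esymm (k + 1) + a * s.esymm k := by
  simp [esymm, powersetCard_cons, map_map, prod_cons, sum_map_mul_left]

theorem esymm_card (s : Multiset R) : s.esymm (card s) = s.prod := by
  induction s using Multiset.induction with
  | empty => simp
  | cons a s ih =>
    rw [card_cons, esymm_cons_succ, esymm_eq_zero_of_card_lt (Nat.lt_succ_self _), ih, prod_cons,
      zero_add]

end CommSemiring

theorem esymm_eq_prod_mul_esymm_inv {K : Type*} [Field K] {s : Multiset K} (hs : (0 : K) ∉ s)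
    {i k : ℕ} (hik : i + k = card s) : s.esymm i = s.prod * (s.map (·⁻¹)).esymm k := by
  induction s using Multiset.induction generalizing i k with
  | empty => simp_all
  | cons a s ih =>
    have ha : a ≠ 0 := fun h => hs (h ▸ mem_cons_self a s)
    have hs' : (0 : K) ∉ s := fun h => hs (mem_cons_of_mem h)
    rw [card_cons] at hik
    rw [map_cons, prod_cons]
    rcases i with _ | i <;> rcases k with _ | k
    · omega
    · rw [esymm_cons_succ, esymm_eq_zero_of_card_lt (s := s.map (·⁻¹)) (by rw [card_map]; omega),
        esymm_zero]
      have h := ih hs' (i := 0) (k := k) (by omega)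
      rw [esymm_zero] at h
      linear_combination h - s.prod * (s.map (·⁻¹)).esymm k * mul_inv_cancel₀ ha
    · rw [esymm_cons_succ, esymm_eq_zero_of_card_lt (s := s) (by omega),
        ih hs' (i := i) (k := 0) (by omega)]
      simp
    · rw [esymm_cons_succ, esymm_cons_succ, ih hs' (i := i + 1) (k := k) (by omega),
        ih hs' (i := i) (k := k + 1) (by omega)]
      linear_combination -s.prod * (s.map (·⁻¹)).esymm k * mul_inv_cancel₀ ha

noncomputable def esymmMean {K : Type*} [Field K] (s : Multiset K) (r : ℕ) : K :=
  s.esymm r / (card s).choose r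

theorem esymmMean_card_sub {K : Type*} [Field K] {s : Multiset K} (hs : (0 : K) ∉ s) {j : ℕ}
    (hj : j ≤ card s) : esymmMean s (card s - j) = s.prod * esymmMean (s.map (·⁻¹)) j := by
  rw [esymmMean, esymmMean, esymm_eq_prod_mul_esymm_inv hs (k := j) (by omega), card_map,
    Nat.choose_symm hj, mul_div_assoc]

theorem esymmMean_mul_le_sq_of_map_inv {s : Multiset ℝ} {r : ℕ} (hn : card s = r + 2)
    (hinv : esymmMean (s.map (·⁻¹)) 0 * esymmMean (s.map (·⁻¹)) 2 ≤
      esymmMean (s.map (·⁻¹)) 1 ^ 2) :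
    esymmMean s r * esymmMean s (r + 2) ≤ esymmMean s (r + 1) ^ 2 := by
  by_cases h0 : (0 : ℝ) ∈ s
  · have hzero : esymmMean s (card s) = 0 := by
      rw [esymmMean, esymm_card, prod_eq_zero h0, zero_div]
    rw [← hn, hzero, mul_zero]
    positivity
  have h2 := esymmMean_card_sub h0 (j := 2) (by omega)
  have h1 := esymmMean_card_sub h0 (j := 1) (by omega)
  have h0' := esymmMean_card_sub h0 (j := 0) (by omega)
  rw [hn, Nat.add_sub_cancel] at h2
  rw [hn, show r + 2 - 1 = r + 1 by omega] at h1
  rw [hn, Nat.sub_zero] at h0'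
  rw [h2, h1, h0']
  calc _ = s.prod ^ 2 * (esymmMean (s.map (·⁻¹)) 0 * esymmMean (s.map (·⁻¹)) 2) := by ring
    _ ≤ s.prod ^ 2 * esymmMean (s.map (·⁻¹)) 1 ^ 2 := by gcongr
    _ = _ := by ring

theorem esymmMean_mul_le_sq_of_card_eq_two {s : Multiset ℝ} (hs : card s = 2) :
    esymmMean s 0 * esymmMean s 2 ≤ esymmMean s 1 ^ 2 := by
  obtain ⟨x, y, rfl⟩ := card_eq_two.1 hs
  suffices x * y ≤ ((x + y) / 2) ^ 2 by simpa [esymmMean] using this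
  nlinarith [sq_nonneg (x - y)]

noncomputable def derivRoots (s : Multiset ℝ) : Multiset ℝ :=
  (derivative (s.map fun a => X - C a).prod).roots

theorem card_derivRoots (s : Multiset ℝ) : card (derivRoots s) = card s - 1 := by
  have hp : (s.map fun a => X - C a).prod.Splits := by
    rw [splits_iff_card_roots, roots_multiset_prod_X_sub_C,
      natDegree_multiset_prod_X_sub_C_eq_card]
  rw [derivRoots, splits_iff_card_roots.1 hp.derivative_of_real, natDegree_derivative,
    natDegree_multiset_prod_X_sub_C_eq_card]

theorem card_mul_esymm_derivRoots (s : Multiset ℝ) {j : ℕ} (hj : j < card s) :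
    card s * (derivRoots s).esymm j = (card s - j) * s.esymm j := by
  set p := (s.map fun a => X - C a).prod
  set n := card s
  have hpdeg : p.natDegree = n := natDegree_multiset_prod_X_sub_C_eq_card s
  have hp : p.Splits := by rw [splits_iff_card_roots, roots_multiset_prod_X_sub_C, hpdeg]
  have hqdeg : p.derivative.natDegree = n - 1 := by rw [natDegree_derivative, hpdeg]
  have hpj : p.coeff (n - j) = (-1) ^ j * s.esymm j := by
    rw [coeff_eq_esymm_roots_of_splits hp (by omega), (monic_multisetProd_X_sub_C s).leadingCoeff,
      roots_multiset_prod_X_sub_C, hpdeg, Nat.sub_sub_self hj.le, one_mul]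
  have hlead : p.derivative.leadingCoeff = n := by
    rw [leadingCoeff, hqdeg, coeff_derivative, Nat.sub_add_cancel (by omega), ← hpdeg,
      (monic_multisetProd_X_sub_C s).coeff_natDegree, hpdeg, Nat.cast_sub (by omega)]
    ring
  have hqj : p.derivative.coeff (n - 1 - j) = n * (-1) ^ j * (derivRoots s).esymm j := by
    rw [coeff_eq_esymm_roots_of_splits hp.derivative_of_real (by omega), hlead, hqdeg,
      Nat.sub_sub_self (by omega)]
    rfl
  have hcoeff := coeff_derivative p (n - 1 - j)
  rw [hqj, show n - 1 - j + 1 = n - j by omega, hpj, Nat.cast_sub (by omega),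
    Nat.cast_sub (by omega)] at hcoeff
  have hsign : ((-1 : ℝ) ^ j) ^ 2 = 1 := by rw [← pow_mul, mul_comm, pow_mul]; norm_num
  linear_combination (-1) ^ j * hcoeff - (n * (derivRoots s).esymm j - (n - j) * s.esymm j) * hsign

theorem esymmMean_derivRoots (s : Multiset ℝ) {j : ℕ} (hj : j < card s) :
    esymmMean (derivRoots s) j = esymmMean s j := by
  obtain ⟨m, hm⟩ : ∃ m, card s = m + 1 := ⟨card s - 1, by omega⟩
  have hchoose : (m.choose j : ℝ) * (m + 1 : ℕ) = ((m + 1).choose j) * ((m + 1 : ℕ) - j : ℝ) := by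
    rw [← Nat.cast_sub (by omega)]
    exact_mod_cast Nat.choose_mul_succ_eq m j
  have hmul := card_mul_esymm_derivRoots s hj
  rw [hm] at hmul hj
  have hc : (m.choose j : ℝ) ≠ 0 := Nat.cast_ne_zero.2 (Nat.choose_ne_zero_iff.2 (by omega))
  have hc' : ((m + 1).choose j : ℝ) ≠ 0 := Nat.cast_ne_zero.2 (Nat.choose_ne_zero_iff.2 hj.le)
  rw [esymmMean, esymmMean, card_derivRoots, hm, Nat.add_sub_cancel, div_eq_div_iff hc hc']
  apply mul_left_cancel₀ (Nat.cast_add_one_ne_zero m)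
  push_cast at hmul hchoose
  linear_combination ((m + 1).choose j : ℝ) * hmul - s.esymm j * hchoose

theorem esymmMean_mul_le_sq (s : Multiset ℝ) {r : ℕ} (hr : r + 2 ≤ card s) :
    esymmMean s r * esymmMean s (r + 2) ≤ esymmMean s (r + 1) ^ 2 := by
  induction hn : card s using Nat.strong_induction_on generalizing s r with
  | _ n ih =>
  have below : ∀ t : Multiset ℝ, card t = n → ∀ k, k + 3 ≤ n →
      esymmMean t k * esymmMean t (k + 2) ≤ esymmMean t (k + 1) ^ 2 := by
    intro t ht k hk
    have := ih (n - 1) (by omega) (derivRoots t) (r := k) (by rw [card_derivRoots]; omega)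
      (by rw [card_derivRoots, ht])
    rwa [esymmMean_derivRoots t (by omega), esymmMean_derivRoots t (by omega),
      esymmMean_derivRoots t (by omega)] at this
  obtain hlt | rfl : r + 3 ≤ n ∨ n = r + 2 := by omega
  · exact below s hn r hlt
  obtain rfl | hr_pos := Nat.eq_zero_or_pos r
  · exact esymmMean_mul_le_sq_of_card_eq_two hn
  exact esymmMean_mul_le_sq_of_map_inv hn (below _ (by rw [card_map, hn]) 0 (by omega))

end Multiset

theorem newton_maclaurin_general (n r : ℕ) (hr : 1 ≤ r) (hr' : r ≤ n - 1)
    (lam : Fin n → ℝ) :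
    Hsym n r lam ^ 2 ≥ Hsym n (r - 1) lam * Hsym n (r + 1) lam := by
  obtain ⟨k, rfl⟩ := Nat.exists_eq_add_of_le' hr
  set s := Finset.univ.val.map lam
  have hs : Multiset.card s = n := by simp [s]
  have hH : ∀ j, Hsym n j lam = s.esymmMean j := fun j => by
    rw [Hsym, Multiset.esymmMean, Finset.esymm_map_val, hs, esymm]
  rw [hH, hH, hH, Nat.add_sub_cancel, add_assoc]
  exact Multiset.esymmMean_mul_le_sq s (by omega)

/-- Newton–Maclaurin inequality: `H_r² ≥ H_{r-1} H_{r+1}`. -/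
theorem newton_maclaurin (n r : ℕ) (hn : 1 < n) (hr : 1 ≤ r) (hr' : r ≤ n - 1)
    (lam : Fin n → ℝ) :
    Hsym n r lam ^ 2 ≥ Hsym n (r - 1) lam * Hsym n (r + 1) lam :=
  newton_maclaurin_general n r hr hr' lam
end

section
/- Let λ₁,…,λₙ be real numbers and 1 ≤ r < n. If the elementary symmetric polynomials satisfy S_r(λ) = 0 and S_{r+1}(λ) = 0, then at most r−1 of the λᵢ are nonzero. -/
/-! Put `p = ∏ (X - λᵢ)` over the nonzero `λᵢ`, of degree `k`. By Vieta, `S_r = S_{r+1} = 0` says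
that the coefficients of `X^(k-r)` and `X^(k-r-1)` vanish. A real-rooted `q` with `q(0) ≠ 0`
satisfies Laguerre's inequality `q'(0)² > q(0) q''(0)`, so `q'(0) = q''(0) = 0` forces `q(0) = 0`.
Derivatives of `p` are real-rooted by Rolle, so applying this to `p^(j)` pushes the two vanishing
coefficients down to the constant one, `±∏ λᵢ ≠ 0`; hence `k < r`. -/

open Polynomial

namespace Polynomial

section Laguerre

variable {R : Type*} [CommRing R]

/-- `p'(0) ^ 2 - p(0) * p''(0)`, the left side of Laguerre's inequality at `0`. -/
def laguerreAtZero (p : R[X]) : R :=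
  p.coeff 1 ^ 2 - 2 * p.coeff 0 * p.coeff 2

theorem laguerreAtZero_mul (f g : R[X]) :
    laguerreAtZero (f * g) =
      f.coeff 0 ^ 2 * laguerreAtZero g + g.coeff 0 ^ 2 * laguerreAtZero f := by
  simp only [laguerreAtZero, coeff_mul, Finset.Nat.antidiagonal_succ, Finset.Nat.antidiagonal_zero,
    Finset.sum_cons, Finset.sum_singleton, Finset.map_cons, Finset.map_singleton,
    Function.Embedding.coe_prodMap, Function.Embedding.coeFn_mk, Function.Embedding.refl_apply,
    Prod.map_apply, zero_add, Nat.reduceAdd]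
  ring

theorem laguerreAtZero_C_mul (c : R) (p : R[X]) :
    laguerreAtZero (C c * p) = c ^ 2 * laguerreAtZero p := by
  simp only [laguerreAtZero, coeff_C_mul]
  ring

theorem laguerreAtZero_X_sub_C (a : R) : laguerreAtZero (X - C a) = 1 := by
  simp [laguerreAtZero, coeff_X, coeff_C]

variable [LinearOrder R] [IsStrictOrderedRing R]

theorem laguerreAtZero_multiset_prod_X_sub_C_pos {s : Multiset R} (hs : s ≠ 0) (h0 : 0 ∉ s) :
    0 < laguerreAtZero (s.map (X - C ·)).prod := by
  induction s using Multiset.induction with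
  | empty => exact absurd rfl hs
  | cons a t ih =>
    have ha : a ≠ 0 := fun h => h0 (h ▸ Multiset.mem_cons_self a t)
    rw [Multiset.map_cons, Multiset.prod_cons, laguerreAtZero_mul, laguerreAtZero_X_sub_C]
    rcases eq_or_ne t 0 with rfl | ht
    · simp [laguerreAtZero, coeff_one]
    · have := ih ht (fun h => h0 (Multiset.mem_cons_of_mem h))
      simp only [coeff_sub, coeff_X_zero, coeff_C_zero, zero_sub, even_two, Even.neg_pow]
      positivity

theorem Splits.laguerreAtZero_pos {p : R[X]} (hp : p.Splits) (h0 : p.eval 0 ≠ 0)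
    (hdeg : p.natDegree ≠ 0) : 0 < laguerreAtZero p := by
  have hlc : p.leadingCoeff ≠ 0 := by
    rintro hlc
    simp [leadingCoeff_eq_zero.mp hlc] at hdeg
  rw [hp.eq_prod_roots, laguerreAtZero_C_mul]
  exact mul_pos (by positivity) (laguerreAtZero_multiset_prod_X_sub_C_pos (hp.roots_ne_zero hdeg)
    fun h => h0 (isRoot_of_mem_roots h))

end Laguerre

theorem Splits.derivative {p : ℝ[X]} (hp : p.Splits) : p.derivative.Splits := by
  rw [splits_iff_card_roots] at hp ⊢
  have := card_roots_le_derivative p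
  have := card_roots' (Polynomial.derivative p)
  rw [natDegree_derivative] at *
  omega

theorem Splits.coeff_eq_zero_of_coeff_succ_eq_zero {p : ℝ[X]} (hp : p.Splits) {t : ℕ}
    (ht : t + 1 < p.natDegree) (h1 : p.coeff (t + 1) = 0) (h2 : p.coeff (t + 2) = 0) :
    p.coeff t = 0 := by
  induction t generalizing p with
  | zero =>
    by_contra h0
    have := hp.laguerreAtZero_pos (by rwa [← coeff_zero_eq_eval_zero]) (by omega)
    simp [laguerreAtZero, h1, h2] at this
  | succ t ih =>
    have hdt : p.derivative.coeff t = 0 := by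
      refine ih hp.derivative (by rw [natDegree_derivative]; omega) ?_ ?_ <;>
        simp [coeff_derivative, h1, h2]
    rw [coeff_derivative] at hdt
    simpa [Nat.cast_add_one_ne_zero] using hdt

theorem Splits.coeff_zero_eq_zero_of_coeff_eq_zero {p : ℝ[X]} (hp : p.Splits) {t : ℕ}
    (ht : t < p.natDegree) (h1 : p.coeff t = 0) (h2 : p.coeff (t + 1) = 0) : p.coeff 0 = 0 := by
  induction t with
  | zero => exact h1
  | succ t ih => exact ih (by omega) (hp.coeff_eq_zero_of_coeff_succ_eq_zero ht h1 h2) h1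

end Polynomial

theorem Multiset.card_lt_of_esymm_eq_zero {s : Multiset ℝ} (h0 : 0 ∉ s) {r : ℕ}
    (h1 : s.esymm r = 0) (h2 : s.esymm (r + 1) = 0) : card s < r := by
  by_contra! hrs
  set p := (s.map fun a => X - C a).prod
  have hp : p.Splits := Splits.multisetProd fun f hf => by
    obtain ⟨a, -, rfl⟩ := Multiset.mem_map.mp hf
    exact Splits.X_sub_C a
  have hdeg : p.natDegree = card s := natDegree_multiset_prod_X_sub_C_eq_card s
  have hp0 : p.coeff 0 ≠ 0 := by
    rw [coeff_zero_eq_eval_zero, eval_multiset_prod, Multiset.map_map]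
    refine Multiset.prod_ne_zero fun h => ?_
    obtain ⟨a, ha, hza⟩ := Multiset.mem_map.mp h
    simp only [Function.comp_apply, eval_sub, eval_X, eval_C, zero_sub, neg_eq_zero] at hza
    exact h0 (hza ▸ ha)
  have hcoeff {j : ℕ} (hj : j ≤ card s) (he : s.esymm j = 0) : p.coeff (card s - j) = 0 := by
    rw [prod_X_sub_C_coeff s (Nat.sub_le _ _), Nat.sub_sub_self hj, he, mul_zero]
  rcases hrs.eq_or_lt with hr | hr
  · exact hp0 (by simpa [hr] using hcoeff hr.le h1)
  · refine hp0 (hp.coeff_zero_eq_zero_of_coeff_eq_zero (t := card s - (r + 1)) (by omega)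
      (hcoeff hr h2) ?_)
    rw [show card s - (r + 1) + 1 = card s - r by omega]
    exact hcoeff hrs h1

theorem esymm_eq_esymm_map_filter_ne_zero {n : ℕ} (r : ℕ) (v : Fin n → ℝ) :
    esymm n r v = (((Finset.univ.filter fun i => v i ≠ 0).val.map v).esymm r) := by
  rw [Finset.esymm_map_val, esymm]
  refine (Finset.sum_subset (Finset.powersetCard_mono (Finset.filter_subset _ _)) ?_).symm
  intro A hA hAT
  obtain ⟨i, hiA, hiT⟩ : ∃ i ∈ A, v i = 0 := by
    by_contra! h
    exact hAT (Finset.mem_powersetCard.mpr ⟨fun i hi => by simpa using h i hi,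
      (Finset.mem_powersetCard.mp hA).2⟩)
  exact Finset.prod_eq_zero hiA hiT

theorem esymm_vanishing_card_general (n r : ℕ)
    (lam : Fin n → ℝ) (h1 : esymm n r lam = 0) (h2 : esymm n (r + 1) lam = 0) :
    (Finset.univ.filter fun i => lam i ≠ 0).card ≤ r - 1 := by
  rw [esymm_eq_esymm_map_filter_ne_zero] at h1 h2
  have := Multiset.card_lt_of_esymm_eq_zero (by simp) h1 h2
  rw [Multiset.card_map, Finset.card_val] at this
  omega

/-- If `S_r = S_{r+1} = 0` then at most `r - 1` of the `λᵢ` are nonzero. -/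
theorem esymm_vanishing_card (n r : ℕ) (hr : 1 ≤ r) (hrn : r < n)
    (lam : Fin n → ℝ) (h1 : esymm n r lam = 0) (h2 : esymm n (r + 1) lam = 0) :
    (Finset.univ.filter fun i => lam i ≠ 0).card ≤ r - 1 :=
  esymm_vanishing_card_general n r lam h1 h2
end

section
/- Let f₁,…,f_r (r ≥ 2) be smooth real functions of one variable on open intervals, with f_i'' never zero, and β > 0 a constant. Suppose for all (x₁,…,x_r) in the product of the intervals, Σ_{k=1}^r [ ∏_{j≠k} f_j''(x_j) ] · (β + f_k'(x_k)²) = 0. Then for each k there exists a nonzero constant a_k with f_k''(x) = a_k (β + f_k'(x)²) for all x, and Σ_{k=1}^r 1/a_k = 0. -/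
/-- Separation of variables in the PDE
`Σ_k (∏_{j≠k} f_j''(x_j)) (β + f_k'(x_k)²) = 0`:
each `f_k` satisfies `f_k'' = a_k (β + f_k'²)` with `Σ 1/a_k = 0`. -/
theorem separation_of_variables (r : ℕ) (hr : 2 ≤ r)
    (f : Fin r → ℝ → ℝ) (I : Fin r → Set ℝ)
    (hI : ∀ k, IsOpen (I k) ∧ (I k).Nonempty ∧ (I k).OrdConnected)
    (hf : ∀ k, ContDiff ℝ (⊤ : ℕ∞) (f k))
    (hf'' : ∀ k, ∀ x ∈ I k, deriv (deriv (f k)) x ≠ 0)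
    (β : ℝ) (hβ : 0 < β)
    (hpde : ∀ x : Fin r → ℝ, (∀ k, x k ∈ I k) →
      ∑ k, (∏ j ∈ Finset.univ.erase k, deriv (deriv (f j)) (x j)) *
        (β + (deriv (f k) (x k)) ^ 2) = 0) :
    ∃ a : Fin r → ℝ, (∀ k, a k ≠ 0) ∧
      (∀ k, ∀ x ∈ I k, deriv (deriv (f k)) x = a k * (β + (deriv (f k) x) ^ 2)) ∧
      ∑ k, 1 / a k = 0 := by
  obtain ⟨p, hp⟩ : ∃ p : Fin r → ℝ, ∀ k, p k ∈ I k :=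
    ⟨fun k => (hI k).2.1.choose, fun k => (hI k).2.1.choose_spec⟩
  set g : Fin r → ℝ → ℝ :=
    fun k x => (β + (deriv (f k) x) ^ 2) / deriv (deriv (f k)) x with hg
  have key : ∀ x : Fin r → ℝ, (∀ k, x k ∈ I k) → ∑ k, g k (x k) = 0 := by
    intro x hx
    have hprod : ∏ j, deriv (deriv (f j)) (x j) ≠ 0 :=
      Finset.prod_ne_zero_iff.2 fun j _ => hf'' j (x j) (hx j)
    have hsum := hpde x hx
    have heq : ∀ k : Fin r, (∏ j ∈ Finset.univ.erase k, deriv (deriv (f j)) (x j)) *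
        (β + (deriv (f k) (x k)) ^ 2) = (∏ j, deriv (deriv (f j)) (x j)) * g k (x k) := by
      intro k
      have hk : deriv (deriv (f k)) (x k) ≠ 0 := hf'' k (x k) (hx k)
      rw [hg]
      rw [← Finset.mul_prod_erase Finset.univ _ (Finset.mem_univ k)]
      field_simp
    rw [Finset.sum_congr rfl (fun k _ => heq k), ← Finset.mul_sum] at hsum
    exact (mul_eq_zero.1 hsum).resolve_left hprod
  have hconst : ∀ k, ∀ x ∈ I k, g k x = g k (p k) := by
    intro k x hx
    have h1 := key (Function.update p k x) (fun j => by
      rcases eq_or_ne j k with rfl | hj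
      · simpa using hx
      · simpa [Function.update_of_ne hj] using hp j)
    have h2 := key p hp
    have hsplit1 : ∑ j, g j (Function.update p k x j) =
        g k x + ∑ j ∈ Finset.univ.erase k, g j (p j) := by
      rw [← Finset.add_sum_erase Finset.univ _ (Finset.mem_univ k)]
      simp only [Function.update_self]
      congr 1
      exact Finset.sum_congr rfl fun j hj => by
        rw [Function.update_of_ne (Finset.ne_of_mem_erase hj)]
    have hsplit2 : ∑ j, g j (p j) = g k (p k) + ∑ j ∈ Finset.univ.erase k, g j (p j) :=
      (Finset.add_sum_erase Finset.univ _ (Finset.mem_univ k)).symm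
    rw [hsplit1] at h1; rw [hsplit2] at h2
    linarith
  have hgne : ∀ k, g k (p k) ≠ 0 := by
    intro k
    have hk : deriv (deriv (f k)) (p k) ≠ 0 := hf'' k (p k) (hp k)
    have hnum : 0 < β + (deriv (f k) (p k)) ^ 2 := by positivity
    exact div_ne_zero hnum.ne' hk
  refine ⟨fun k => 1 / g k (p k), fun k => one_div_ne_zero (hgne k), ?_, ?_⟩
  · intro k x hx
    have hc := hconst k x hx
    have hk : deriv (deriv (f k)) x ≠ 0 := hf'' k x hx
    rw [hg] at hc
    simp only at hc
    rw [div_eq_iff hk] at hc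
    have hk' : deriv (deriv (f k)) (p k) ≠ 0 := hf'' k (p k) (hp k)
    have hn : β + (deriv (f k) (p k)) ^ 2 ≠ 0 := by positivity
    rw [hc]
    simp only [hg]
    field_simp
  · simp only [one_div_one_div]
    exact key p hp
end

section
/- Let G = Iₙ + vᵀv for a row vector v ∈ ℝⁿ and B = diag(d₁,…,dₙ). Then for each r, Σ_{i₁<…<i_r} det[G¹,…,B^{i₁},…,B^{i_r},…,Gⁿ] = Σ_{i₁<…<i_r} d_{i₁}⋯d_{i_r}·(1 + Σ_{m∉{i₁,…,i_r}} v_m²), where the determinant is of the matrix whose columns are those of G except that columns i₁,…,i_r are replaced by the corresponding columns of B. -/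
/-!
Replacing the columns indexed by `s` of `1 + u vᵀ` by those of `diag d` gives
`(1 + u wᵀ) · diag c`, where `w` is `v` with the entries in `s` set to zero and `c` is `d` on `s`
and `1` off `s`: the columns in `s` of `u wᵀ` vanish, and off `s` scaling by `c` does nothing.
The matrix determinant lemma `det (1 + u wᵀ) = 1 + w ⬝ u` then gives each determinant in
closed form, so the two sums agree term by term.
-/

namespace Matrix

def replaceCols {m n α : Type*} [DecidableEq n] (A B : Matrix m n α) (s : Finset n) :
    Matrix m n α :=
  of fun i j => if j ∈ s then B i j else A i j

variable {n R : Type*} [Fintype n] [DecidableEq n] [CommRing R]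

theorem det_one_add_vecMulVec (u v : n → R) : det (1 + vecMulVec u v) = 1 + v ⬝ᵥ u := by
  rw [vecMulVec_eq Unit, det_one_add_replicateCol_mul_replicateRow]

theorem replaceCols_one_add_vecMulVec_diagonal (u v d : n → R) (s : Finset n) :
    replaceCols (1 + vecMulVec u v) (diagonal d) s =
      (1 + vecMulVec u fun j => if j ∈ s then 0 else v j) *
        diagonal fun j => if j ∈ s then d j else 1 := by
  ext i j
  by_cases hj : j ∈ s <;> by_cases hij : i = j <;>
    simp [replaceCols, hj, hij, mul_diagonal, vecMulVec_apply]

theorem det_replaceCols_one_add_vecMulVec_diagonal (u v d : n → R) (s : Finset n) :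
    det (replaceCols (1 + vecMulVec u v) (diagonal d) s) =
      (∏ i ∈ s, d i) * (1 + ∑ m ∈ Finset.univ \ s, v m * u m) := by
  have hdot : ((fun j => if j ∈ s then 0 else v j) ⬝ᵥ u) = ∑ m ∈ Finset.univ \ s, v m * u m := by
    simp only [dotProduct, ite_mul, zero_mul, Finset.sum_ite, Finset.sum_const_zero, zero_add,
      Finset.filter_not, Finset.filter_mem_eq_inter, Finset.univ_inter]
  rw [replaceCols_one_add_vecMulVec_diagonal, det_mul, det_one_add_vecMulVec, det_diagonal,
    Finset.prod_ite_mem, Finset.univ_inter, hdot, mul_comm]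

end Matrix

/-- For `G = Iₙ + vᵀv` and `B = diag d`, the sum over `r`-subsets of the determinants of
`G` with columns in the subset replaced by those of `B` equals
`Σ_{i₁<…<i_r} d_{i₁}⋯d_{i_r} (1 + Σ_{m∉{i₁,…,i_r}} v_m²)`. -/
theorem mixed_column_det_sum (n r : ℕ) (v d : Fin n → ℝ) :
    let G : Matrix (Fin n) (Fin n) ℝ := 1 + Matrix.vecMulVec v v
    let B : Matrix (Fin n) (Fin n) ℝ := Matrix.diagonal d
    ∑ s ∈ Finset.powersetCard r Finset.univ,
        (Matrix.det fun i j => if j ∈ s then B i j else G i j) =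
      ∑ s ∈ Finset.powersetCard r Finset.univ,
        (∏ i ∈ s, d i) * (1 + ∑ m ∈ Finset.univ \ s, (v m) ^ 2) := by
  refine Finset.sum_congr rfl fun s _ => ?_
  simp only [sq]
  exact Matrix.det_replaceCols_one_add_vecMulVec_diagonal v v d s
end

section
/- For a row vector v ∈ ℝⁿ and indices i₁ < … < i_r, the determinant of the matrix whose columns are e_j + v_j·vᵀ for j ∉ {i₁,…,i_r} and e_{i_k} for the remaining columns equals 1 + Σ_{m∉{i₁,…,i_r}} v_m². -/
/-!
The matrix is the rank-one perturbation `1 + v wᵀ` of the identity, where `w` is `v` with the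
entries indexed by `s` set to zero, so by the matrix determinant lemma its determinant is
`1 + w ⬝ v = 1 + Σ_{m∉s} v_m²`.
-/

open Matrix

theorem columns_replaced_eq_one_add_vecMulVec {ι R : Type*} [DecidableEq ι] [CommRing R]
    (v : ι → R) (s : Finset ι) :
    (of fun i j => if j ∈ s then (if i = j then (1 : R) else 0)
        else (if i = j then (1 : R) else 0) + v j * v i) =
      1 + vecMulVec v (fun j => if j ∈ s then 0 else v j) := by
  ext i j
  by_cases hj : j ∈ s <;> simp [hj, one_apply, vecMulVec_apply, mul_comm]

theorem ite_mem_dotProduct_self {ι R : Type*} [Fintype ι] [DecidableEq ι] [CommRing R]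
    (v : ι → R) (s : Finset ι) :
    (fun j => if j ∈ s then 0 else v j) ⬝ᵥ v = ∑ m ∈ Finset.univ \ s, v m ^ 2 := by
  simp only [dotProduct, ite_mul, zero_mul, Finset.sum_ite, Finset.sum_const_zero, zero_add,
    ← Finset.compl_eq_univ_sdiff, Finset.filter_not, Finset.filter_mem_eq_inter,
    Finset.univ_inter, sq]

theorem det_columns_replaced_general (n : ℕ) (v : Fin n → ℝ) (s : Finset (Fin n)) :
    (Matrix.det fun i j =>
        if j ∈ s then (if i = j then (1 : ℝ) else 0)
        else (if i = j then (1 : ℝ) else 0) + v j * v i) =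
      1 + ∑ m ∈ Finset.univ \ s, (v m) ^ 2 := by
  rw [← ite_mem_dotProduct_self, ← det_one_add_replicateCol_mul_replicateRow (ι := Unit),
    ← vecMulVec_eq, ← columns_replaced_eq_one_add_vecMulVec]
  rfl

/-- The determinant of the matrix whose `j`-th column is `e_j + v_j vᵀ` for `j ∉ s`
and `e_j` for `j ∈ s` equals `1 + Σ_{m∉s} v_m²`. -/
theorem det_columns_replaced (n r : ℕ) (v : Fin n → ℝ) (s : Finset (Fin n))
    (hs : s.card = r) :
    (Matrix.det fun i j =>
        if j ∈ s then (if i = j then (1 : ℝ) else 0)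
        else (if i = j then (1 : ℝ) else 0) + v j * v i) =
      1 + ∑ m ∈ Finset.univ \ s, (v m) ^ 2 :=
  det_columns_replaced_general n v s
end

section
/- Let F(x₁,…,xₙ) = Σᵢ fᵢ(xᵢ) with fᵢ smooth, let W² = 1 + Σᵢ fᵢ'(xᵢ)², and let M be the graph of F with downward-compatible unit normal Wξ = e_{n+1} − ∇F. Then the r-th mean curvature function satisfies S_r = W^{−(r+2)} · Σ_{1≤i₁<…<i_r≤n} f_{i₁}''⋯f_{i_r}''·(1 + Σ_{m∉{i₁,…,i_r}} (f_m')²). -/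
open Matrix


section aux
open Finset

lemma det_diag_add_rank_one {n : ℕ} (μ u w : Fin n → ℝ) (h : ∀ i, μ i ≠ 0) :
    (Matrix.diagonal μ + Matrix.vecMulVec u w).det
      = ∏ i, μ i + ∑ i, u i * w i * ∏ j ∈ Finset.univ.erase i, μ j := by
  have hdet : (Matrix.diagonal μ).det = ∏ i, μ i := Matrix.det_diagonal
  have hunit : IsUnit (Matrix.diagonal μ).det := by
    rw [hdet]
    exact (Finset.prod_ne_zero_iff.mpr fun i _ => h i).isUnit
  rw [Matrix.vecMulVec_eq Unit, Matrix.det_add_replicateCol_mul_replicateRow hunit, hdet, Matrix.det_unique]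
  have hinv : (Matrix.diagonal μ)⁻¹ = Matrix.diagonal fun i => (μ i)⁻¹ := by
    apply Matrix.inv_eq_right_inv
    rw [Matrix.diagonal_mul_diagonal]
    rw [show (fun i => μ i * (μ i)⁻¹) = fun _ => (1:ℝ) from funext fun i => mul_inv_cancel₀ (h i)]
    exact Matrix.diagonal_one
  rw [hinv]
  simp only [Matrix.add_apply, Matrix.one_apply_eq, Matrix.mul_apply, Matrix.replicateRow_apply,
    Matrix.replicateCol_apply, Matrix.diagonal_apply, Finset.sum_mul, ite_mul, mul_ite, mul_zero,
    zero_mul, Finset.sum_ite_eq, Finset.mem_univ, if_true]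
  simp only [Finset.sum_ite_eq', Finset.mem_univ, if_true]
  rw [mul_add, mul_one, Finset.mul_sum]
  congr 1
  refine Finset.sum_congr rfl fun j _ => ?_
  calc (∏ i, μ i) * (w j * (μ j)⁻¹ * u j)
      = (μ j * ∏ i ∈ Finset.univ.erase j, μ i) * (w j * (μ j)⁻¹ * u j) := by
        rw [Finset.mul_prod_erase _ _ (Finset.mem_univ j)]
    _ = (μ j * (μ j)⁻¹) * ((∏ i ∈ Finset.univ.erase j, μ i) * w j * u j) := by ring
    _ = u j * w j * ∏ i ∈ Finset.univ.erase j, μ i := by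
        rw [mul_inv_cancel₀ (h j)]; ring


lemma comb_expand {n : ℕ} (a w : Fin n → ℝ) (t : ℝ) :
    ∏ i, (a i + t) + t * ∑ i, w i * ∏ j ∈ Finset.univ.erase i, (a j + t)
      = ∑ s ∈ (Finset.univ : Finset (Fin n)).powerset,
          (∏ i ∈ s, a i) * (1 + ∑ m ∈ Finset.univ \ s, w m) * t ^ (n - s.card) := by
  classical
  have h1 : ∏ i, (a i + t) = ∑ s ∈ (Finset.univ : Finset (Fin n)).powerset,
      (∏ i ∈ s, a i) * t ^ (n - s.card) := by
    rw [Finset.prod_add]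
    refine Finset.sum_congr rfl fun s hs => ?_
    rw [Finset.prod_const, Finset.card_sdiff_of_subset (Finset.mem_powerset.mp hs), Finset.card_univ,
      Fintype.card_fin]
  have h2 : t * ∑ i, w i * ∏ j ∈ Finset.univ.erase i, (a j + t)
      = ∑ s ∈ (Finset.univ : Finset (Fin n)).powerset,
          (∏ i ∈ s, a i) * (∑ m ∈ Finset.univ \ s, w m) * t ^ (n - s.card) := by
    have h3 : ∀ i : Fin n, t * (w i * ∏ j ∈ Finset.univ.erase i, (a j + t))
        = ∑ s ∈ (Finset.univ.erase i).powerset,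
            w i * ((∏ j ∈ s, a j) * (t * t ^ (n - 1 - s.card))) := by
      intro i
      rw [Finset.prod_add, Finset.mul_sum, Finset.mul_sum]
      refine Finset.sum_congr rfl fun s hs => ?_
      rw [Finset.prod_const, Finset.card_sdiff_of_subset (Finset.mem_powerset.mp hs),
        Finset.card_erase_of_mem (Finset.mem_univ i), Finset.card_univ, Fintype.card_fin]
      ring
    rw [Finset.mul_sum]
    simp_rw [h3]
    rw [Finset.sum_comm' (t' := (Finset.univ : Finset (Fin n)).powerset)
      (s' := fun s => Finset.univ \ s) (fun i s => by
        simp [Finset.subset_erase, and_comm])]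
    refine Finset.sum_congr rfl fun s hs => ?_
    rcases Finset.eq_empty_or_nonempty (Finset.univ \ s) with he | hne
    · rw [he]
      simp
    · obtain ⟨i0, hi0⟩ := hne
      have hsne : s ≠ Finset.univ := by
        intro hsu; rw [hsu] at hi0; simp at hi0
      have hlt : s.card < n := by
        have h := Finset.card_lt_card (Finset.ssubset_univ_iff.mpr hsne)
        simpa using h
      have hp : t * t ^ (n - 1 - s.card) = t ^ (n - s.card) := by
        rw [← pow_succ']
        congr 1
        omega
      rw [← Finset.sum_mul, hp]
      ring
  rw [h1, h2, ← Finset.sum_add_distrib]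
  refine Finset.sum_congr rfl fun s _ => by ring

end aux

/-- Proposition `EqSr`: for the translation graph of `F = Σ fᵢ`, with first fundamental
form `G = Iₙ + (∇F)ᵀ∇F`, second fundamental form `B = W⁻¹ diag(fᵢ'')` and shape operator
`A = G⁻¹B`, the curvatures `S_r` (defined by `det(A − λI) = Σ (−1)^{n−k} S_k λ^{n−k}`)
are given by
`S_r = W^{−(r+2)} Σ_{i₁<…<i_r} f_{i₁}''⋯f_{i_r}'' (1 + Σ_{m∉{i₁,…,i_r}} (f_m')²)`. -/
theorem Sr_translation_hypersurface (n : ℕ) (f : Fin n → ℝ → ℝ)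
    (hf : ∀ i, ContDiff ℝ (⊤ : ℕ∞) (f i)) (x : Fin n → ℝ) :
    let v : Fin n → ℝ := fun i => deriv (f i) (x i)
    let d : Fin n → ℝ := fun i => deriv (deriv (f i)) (x i)
    let W : ℝ := Real.sqrt (1 + ∑ i, (v i) ^ 2)
    let G : Matrix (Fin n) (Fin n) ℝ := 1 + Matrix.vecMulVec v v
    let B : Matrix (Fin n) (Fin n) ℝ := W⁻¹ • Matrix.diagonal d
    let A : Matrix (Fin n) (Fin n) ℝ := G⁻¹ * B
    let S : ℕ → ℝ := fun r =>
      (∑ s ∈ Finset.powersetCard r (Finset.univ : Finset (Fin n)),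
          (∏ i ∈ s, d i) * (1 + ∑ m ∈ Finset.univ \ s, (v m) ^ 2)) / W ^ (r + 2)
    ∀ lam : ℝ,
      (A - lam • (1 : Matrix (Fin n) (Fin n) ℝ)).det =
        ∑ k ∈ Finset.range (n + 1), (-1 : ℝ) ^ (n - k) * S k * lam ^ (n - k) := by
  intro v d W G B A S lam
  classical
  have hGdef : G = 1 + Matrix.vecMulVec v v := rfl
  have hBdef : B = W⁻¹ • Matrix.diagonal d := rfl
  have hAdef : A = G⁻¹ * B := rfl
  have hSdef : ∀ r, S r = (∑ s ∈ Finset.powersetCard r (Finset.univ : Finset (Fin n)),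
      (∏ i ∈ s, d i) * (1 + ∑ m ∈ Finset.univ \ s, (v m) ^ 2)) / W ^ (r + 2) := fun r => rfl
  have hvpos : (0:ℝ) < 1 + ∑ i, v i ^ 2 := by positivity
  have hW2 : W ^ 2 = 1 + ∑ i, v i ^ 2 := Real.sq_sqrt (le_of_lt hvpos)
  have hWpos : 0 < W := Real.sqrt_pos.mpr hvpos
  have hW : W ≠ 0 := ne_of_gt hWpos
  have hdetG : G.det = 1 + ∑ i, v i ^ 2 := by
    rw [hGdef, Matrix.vecMulVec_eq Unit, Matrix.det_one_add_replicateCol_mul_replicateRow]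
    simp [dotProduct, sq]
  have hGunit : IsUnit G.det := by
    rw [hdetG]; exact (ne_of_gt hvpos).isUnit
  -- the key generic identity
  have key : ∀ l : ℝ, (∀ i, W⁻¹ * d i - l ≠ 0) →
      (A - l • (1 : Matrix (Fin n) (Fin n) ℝ)).det =
        ∑ k ∈ Finset.range (n + 1), (-1 : ℝ) ^ (n - k) * S k * l ^ (n - k) := by
    intro l hl
    have hfac : A - l • (1 : Matrix (Fin n) (Fin n) ℝ) = G⁻¹ * (B - l • G) := by
      rw [Matrix.mul_sub, Matrix.mul_smul G⁻¹ l G, Matrix.nonsing_inv_mul G hGunit, hAdef]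
    have hBG : B - l • G = Matrix.diagonal (fun i => W⁻¹ * d i - l)
        + Matrix.vecMulVec ((-l) • v) v := by
      rw [hBdef, hGdef]
      ext i j
      by_cases hij : i = j <;>
        simp [hij, Matrix.diagonal_apply, Matrix.one_apply, Matrix.vecMulVec_apply,
          Matrix.smul_apply, Matrix.sub_apply, Matrix.add_apply, smul_eq_mul] <;> ring
    have hdetBG : (B - l • G).det
        = ∏ i, (W⁻¹ * d i + (-l)) + (-l) * ∑ i, (v i ^ 2) *
            ∏ j ∈ Finset.univ.erase i, (W⁻¹ * d j + (-l)) := by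
      rw [hBG, det_diag_add_rank_one _ _ _ (by simpa using hl)]
      simp only [Pi.smul_apply, smul_eq_mul, sub_eq_add_neg]
      rw [Finset.mul_sum]
      exact congrArg _ (Finset.sum_congr rfl fun i _ => by ring)
    rw [hfac, Matrix.det_mul, Matrix.det_nonsing_inv, Ring.inverse_eq_inv', hdetG, hdetBG,
      comb_expand]
    rw [Finset.sum_powerset, Finset.card_univ, Fintype.card_fin, Finset.mul_sum]
    refine Finset.sum_congr rfl fun k hk => ?_
    rw [hSdef, Finset.mul_sum, Finset.sum_div, Finset.mul_sum, Finset.sum_mul]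
    refine Finset.sum_congr rfl fun s hs => ?_
    have hcard : s.card = k := (Finset.mem_powersetCard.mp hs).2
    have hprod : ∏ i ∈ s, (W⁻¹ * d i) = (W⁻¹) ^ k * ∏ i ∈ s, d i := by
      rw [Finset.prod_mul_distrib, Finset.prod_const, hcard]
    rw [hprod, hcard, neg_pow]
    rw [show ((1 : ℝ) + ∑ i, v i ^ 2) = W ^ 2 from hW2.symm]
    field_simp
    have hWk : W ^ k * W⁻¹ ^ k = 1 := by rw [← mul_pow, mul_inv_cancel₀ hW, one_pow]
    linear_combination (W ^ 2 * (∏ i ∈ s, d i) * l ^ (n - k)) * hWk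
  -- polynomial extension
  set P : Polynomial ℝ :=
    (A.map Polynomial.C - (Polynomial.X : Polynomial ℝ) • 1).det with hPdef
  set Q : Polynomial ℝ := ∑ k ∈ Finset.range (n + 1),
      Polynomial.C ((-1 : ℝ) ^ (n - k) * S k) * Polynomial.X ^ (n - k) with hQdef
  have hP : ∀ l : ℝ, P.eval l = (A - l • (1 : Matrix (Fin n) (Fin n) ℝ)).det := by
    intro l
    have h := RingHom.map_det (Polynomial.evalRingHom l)
      (A.map Polynomial.C - (Polynomial.X : Polynomial ℝ) • 1)
    have hmap : (A.map Polynomial.C - (Polynomial.X : Polynomial ℝ) • 1).map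
        (Polynomial.evalRingHom l) = A - l • (1 : Matrix (Fin n) (Fin n) ℝ) := by
      ext i j
      by_cases hij : i = j <;>
        simp [hij, Matrix.map_apply, Matrix.sub_apply, Matrix.smul_apply, Matrix.one_apply,
          smul_eq_mul]
    rw [hPdef, show Polynomial.eval l
        ((A.map Polynomial.C - (Polynomial.X : Polynomial ℝ) • 1).det)
      = (Polynomial.evalRingHom l)
        ((A.map Polynomial.C - (Polynomial.X : Polynomial ℝ) • 1).det) from rfl, h, RingHom.mapMatrix_apply, hmap]
  have hQ : ∀ l : ℝ, Q.eval l
      = ∑ k ∈ Finset.range (n + 1), (-1 : ℝ) ^ (n - k) * S k * l ^ (n - k) := by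
    intro l
    rw [hQdef]
    simp [Polynomial.eval_finset_sum]
  have hPQ : P = Q := by
    apply Polynomial.eq_of_infinite_eval_eq
    apply Set.Infinite.mono (s := (Set.range fun i : Fin n => W⁻¹ * d i)ᶜ)
    · intro l hl
      have hl' : ∀ i, W⁻¹ * d i - l ≠ 0 := by
        intro i hi
        exact hl ⟨i, by linarith [sub_eq_zero.mp hi]⟩
      simp only [Set.mem_setOf_eq, hP, hQ]
      exact key l hl'
    · exact Set.Finite.infinite_compl (Set.finite_range _)
  rw [← hP lam, hPQ, hQ lam]
end

section
/- Let f₁,…,fₙ be smooth and set G_r = Σ_{i₁<…<i_r} f_{i₁}''⋯f_{i_r}''·(1 + Σ_{m∉{i₁,…,i_r}} (f_m')²). For distinct indices l₁,…,l_{r+1}, the mixed partial derivative ∂^{r+1}G_r/∂x_{l₁}⋯∂x_{l_{r+1}} = 2·Σ_{k=1}^{r+1} f_{l_k}'·f_{l_k}''·∏_{m≠k} f_{l_m}'''. -/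
/-- Partial derivative of `F : (Fin n → ℝ) → ℝ` in the `i`-th coordinate. -/
noncomputable def pd {n : ℕ} (i : Fin n) (F : (Fin n → ℝ) → ℝ) : (Fin n → ℝ) → ℝ :=
  fun x => deriv (fun t => F (Function.update x i t)) (x i)

namespace MixedPartialAux

open Finset Function
open scoped ContDiff

variable {n : ℕ}

/-- Monomial: product of single-variable functions. -/
noncomputable def P (g : Fin n → ℝ → ℝ) : (Fin n → ℝ) → ℝ := fun x => ∏ i, g i (x i)

/-- Symbolic partial derivative on the family of factors. -/
noncomputable def upd (j : Fin n) (g : Fin n → ℝ → ℝ) : Fin n → ℝ → ℝ :=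
  Function.update g j (deriv (g j))

lemma smooth_upd {g : Fin n → ℝ → ℝ} (hg : ∀ i, ContDiff ℝ ∞ (g i)) (j i : Fin n) :
    ContDiff ℝ ∞ (upd j g i) := by
  rcases eq_or_ne i j with rfl | h
  · simpa [upd] using (contDiff_infty_iff_deriv.mp (hg i)).2
  · simpa [upd, Function.update_of_ne h] using hg i

lemma smooth_foldr {g : Fin n → ℝ → ℝ} (hg : ∀ i, ContDiff ℝ ∞ (g i)) (L : List (Fin n)) :
    ∀ i, ContDiff ℝ ∞ ((L.foldr upd g) i) := by
  induction L generalizing g with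
  | nil => exact hg
  | cons a L ih => exact fun i => smooth_upd (ih hg) a i

lemma prod_update_comp (g : Fin n → ℝ → ℝ) (x : Fin n → ℝ) (j : Fin n) (t : ℝ) :
    P g (Function.update x j t) = g j t * ∏ i ∈ univ.erase j, g i (x i) := by
  rw [P, ← Finset.mul_prod_erase univ _ (mem_univ j), Function.update_self]
  congr 1
  exact Finset.prod_congr rfl fun i hi => by
    rw [Function.update_of_ne (Finset.ne_of_mem_erase hi)]

lemma P_apply_erase (g : Fin n → ℝ → ℝ) (x : Fin n → ℝ) (j : Fin n) :
    P g x = g j (x j) * ∏ i ∈ univ.erase j, g i (x i) :=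
  (Finset.mul_prod_erase univ (fun i => g i (x i)) (mem_univ j)).symm

lemma pd_P_apply (g : Fin n → ℝ → ℝ) (hg : ∀ i, Differentiable ℝ (g i)) (j : Fin n)
    (x : Fin n → ℝ) : pd j (P g) x = P (upd j g) x := by
  rw [pd]
  have h1 : (fun t => P g (Function.update x j t))
      = fun t => g j t * ∏ i ∈ univ.erase j, g i (x i) := funext fun t => prod_update_comp g x j t
  rw [h1, deriv_mul_const (hg j (x j)) _, P_apply_erase (upd j g) x j]
  congr 1
  · simp [upd]
  · exact Finset.prod_congr rfl fun i hi => by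
      rw [upd, Function.update_of_ne (Finset.ne_of_mem_erase hi)]

lemma pd_sum {J : Type*} (S : Finset J) (G : J → Fin n → ℝ → ℝ)
    (hG : ∀ j i, Differentiable ℝ (G j i)) (a : Fin n) (x : Fin n → ℝ) :
    pd a (fun y => ∑ j ∈ S, P (G j) y) x = ∑ j ∈ S, P (upd a (G j)) x := by
  rw [pd]
  have h1 : (fun t => ∑ j ∈ S, P (G j) (Function.update x a t))
      = fun t => ∑ j ∈ S, (G j a t * ∏ i ∈ univ.erase a, G j i (x i)) :=
    funext fun t => Finset.sum_congr rfl fun j _ => prod_update_comp (G j) x a t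
  rw [h1, deriv_fun_sum (fun j _ => ((hG j a (x a)).mul_const _))]
  refine Finset.sum_congr rfl fun j _ => ?_
  rw [deriv_mul_const (hG j a (x a)) _, P_apply_erase (upd a (G j)) x a]
  congr 1
  · simp [upd]
  · exact Finset.prod_congr rfl fun i hi => by
      rw [upd, Function.update_of_ne (Finset.ne_of_mem_erase hi)]

lemma foldr_pd {J : Type*} (L : List (Fin n)) (S : Finset J) (G : J → Fin n → ℝ → ℝ)
    (hG : ∀ j i, ContDiff ℝ ∞ (G j i)) :
    (L.foldr pd (fun y => ∑ j ∈ S, P (G j) y)) =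
      fun x => ∑ j ∈ S, P (L.foldr upd (G j)) x := by
  induction L with
  | nil => rfl
  | cons a L ih =>
    rw [List.foldr_cons, ih]
    funext x
    exact pd_sum S (fun j => L.foldr upd (G j))
      (fun j i => (smooth_foldr (hG j) L i).differentiable (by simp)) a x

lemma foldr_upd_apply (L : List (Fin n)) (hL : L.Nodup) (g : Fin n → ℝ → ℝ) (i : Fin n) :
    (L.foldr upd g) i = if i ∈ L then deriv (g i) else g i := by
  induction L generalizing g with
  | nil => simp
  | cons a L ih =>
    rw [List.foldr_cons]
    rcases eq_or_ne i a with rfl | h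
    · have hiL : i ∉ L := (List.nodup_cons.mp hL).1
      simp [upd, ih (List.nodup_cons.mp hL).2, hiL]
    · simp only [upd, Function.update_of_ne h, ih (List.nodup_cons.mp hL).2 g,
        List.mem_cons]
      simp [h]

end MixedPartialAux
namespace MixedPartialAux

/-- The symbolic family of factors for the expansion of `Gr`. -/
noncomputable def Gfam (f : Fin n → ℝ → ℝ) (j : Σ _ : Finset (Fin n), Option (Fin n))
    (i : Fin n) : ℝ → ℝ :=
  Option.elim j.2 (if i ∈ j.1 then deriv (deriv (f i)) else fun _ => 1)
    (fun m => if i = m then (fun t => (deriv (f m) t) ^ 2)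
      else if i ∈ j.1 then deriv (deriv (f i)) else fun _ => 1)

end MixedPartialAux

open MixedPartialAux in
/-- Identity (dGr): for
`G_r(x) = Σ_{i₁<…<i_r} f_{i₁}''(x_{i₁})⋯f_{i_r}''(x_{i_r}) (1 + Σ_{m∉{i₁,…,i_r}} f_m'(x_m)²)`
and distinct indices `l₁,…,l_{r+1}`,
`∂^{r+1}G_r/∂x_{l₁}⋯∂x_{l_{r+1}} = 2 Σ_k f_{l_k}' f_{l_k}'' ∏_{m≠k} f_{l_m}'''`. -/
theorem mixed_partial_Gr (n r : ℕ) (f : Fin n → ℝ → ℝ)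
    (hf : ∀ i, ContDiff ℝ (⊤ : ℕ∞) (f i)) (l : Fin (r + 1) → Fin n) (hl : Function.Injective l) :
    let Gr : (Fin n → ℝ) → ℝ := fun x =>
      ∑ s ∈ Finset.powersetCard r (Finset.univ : Finset (Fin n)),
        (∏ i ∈ s, deriv (deriv (f i)) (x i)) *
          (1 + ∑ m ∈ Finset.univ \ s, (deriv (f m) (x m)) ^ 2)
    ∀ x : Fin n → ℝ,
      ((List.ofFn l).foldr pd Gr) x =
        2 * ∑ k : Fin (r + 1),
          deriv (f (l k)) (x (l k)) * deriv (deriv (f (l k))) (x (l k)) *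
            ∏ m ∈ Finset.univ.erase k, deriv (deriv (deriv (f (l m)))) (x (l m)) := by
  classical
  intro Gr x
  open Finset in
  open scoped ContDiff in
  have hf' : ∀ i, ContDiff ℝ ∞ (f i) := fun i => (hf i).of_le (by simp)
  have hf1 : ∀ i, ContDiff ℝ ∞ (deriv (f i)) := fun i => (contDiff_infty_iff_deriv.mp (hf' i)).2
  have hf2 : ∀ i, ContDiff ℝ ∞ (deriv (deriv (f i))) :=
    fun i => (contDiff_infty_iff_deriv.mp (hf1 i)).2
  set pc := Finset.powersetCard r (Finset.univ : Finset (Fin n)) with hpc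
  set Jset : Finset (Σ _ : Finset (Fin n), Option (Fin n)) :=
    pc.sigma (fun s => Finset.insertNone (Finset.univ \ s)) with hJset
  set G := Gfam f with hGdef
  -- smoothness of all factors
  have hG : ∀ j i, ContDiff ℝ ∞ (G j i) := by
    rintro ⟨s, o⟩ i
    rcases o with _ | m
    · by_cases h : i ∈ s <;> simp [hGdef, Gfam, h, hf2 i, contDiff_const]
    · rcases eq_or_ne i m with rfl | h
      · simpa [hGdef, Gfam] using (hf1 i).pow 2
      · by_cases h2 : i ∈ s <;> simp [hGdef, Gfam, h, h2, hf2 i, contDiff_const]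
  -- Step 1 : Gr is the sum of the monomials P (G j)
  have hGr : Gr = fun y => ∑ j ∈ Jset, P (G j) y := by
    funext y
    show (∑ s ∈ pc, (∏ i ∈ s, deriv (deriv (f i)) (y i)) *
        (1 + ∑ m ∈ Finset.univ \ s, (deriv (f m) (y m)) ^ 2)) = _
    rw [hJset, Finset.sum_sigma]
    refine Finset.sum_congr rfl fun s hs => ?_
    rw [Finset.sum_insertNone]
    have hnone : P (G ⟨s, none⟩) y = ∏ i ∈ s, deriv (deriv (f i)) (y i) := by
      show (∏ i, (if i ∈ s then deriv (deriv (f i)) else fun _ => 1) (y i)) = _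
      have h0 : ∀ i ∈ Finset.univ, (if i ∈ s then deriv (deriv (f i)) else fun _ => (1:ℝ)) (y i)
          = if i ∈ s then deriv (deriv (f i)) (y i) else 1 := fun i _ => by
        by_cases h : i ∈ s <;> simp [h]
      rw [Finset.prod_congr rfl h0, Finset.prod_ite_mem, Finset.univ_inter]
    have hsome : ∀ m ∈ Finset.univ \ s, P (G ⟨s, some m⟩) y =
        (deriv (f m) (y m)) ^ 2 * ∏ i ∈ s, deriv (deriv (f i)) (y i) := by
      intro m hm
      have hms : m ∉ s := (Finset.mem_sdiff.mp hm).2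
      rw [P_apply_erase _ y m]
      show (if m = m then (fun t => (deriv (f m) t) ^ 2)
          else if m ∈ s then deriv (deriv (f m)) else fun _ => 1) (y m) * _ = _
      rw [if_pos rfl]
      congr 1
      have : ∀ i ∈ Finset.univ.erase m, G ⟨s, some m⟩ i (y i) =
          (if i ∈ s then deriv (deriv (f i)) (y i) else 1) := by
        intro i hi
        have him : i ≠ m := Finset.ne_of_mem_erase hi
        show (if i = m then (fun t => (deriv (f m) t) ^ 2)
            else if i ∈ s then deriv (deriv (f i)) else fun _ => 1) (y i) = _
        rw [if_neg him]
        by_cases h2 : i ∈ s <;> simp [h2]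
      rw [Finset.prod_congr rfl this, Finset.prod_ite_mem]
      congr 1
      rw [Finset.inter_eq_right]
      intro i hi
      exact Finset.mem_erase.mpr ⟨fun h => hms (h ▸ hi), Finset.mem_univ i⟩
    rw [hnone, Finset.sum_congr rfl hsome, mul_add, mul_one, Finset.mul_sum]
    congr 1
    exact Finset.sum_congr rfl fun m _ => mul_comm _ _
  rw [hGr, foldr_pd _ _ _ hG]
  set L := List.ofFn l with hLdef
  have hnd : L.Nodup := List.nodup_ofFn.mpr hl
  set Lf : Finset (Fin n) := Finset.image l Finset.univ with hLfdef
  have hmemL : ∀ i, i ∈ L ↔ i ∈ Lf := by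
    intro i
    rw [hLdef, List.mem_ofFn, hLfdef]
    simp [Set.mem_range, Finset.mem_image]
  have hcardLf : Lf.card = r + 1 := by
    rw [hLfdef, Finset.card_image_of_injective _ hl, Finset.card_univ, Fintype.card_fin]
  -- rewrite each monomial via the fold formula
  have hP : ∀ j : (Σ _ : Finset (Fin n), Option (Fin n)),
      P (L.foldr upd (G j)) x
        = ∏ i, (if i ∈ Lf then deriv (G j i) (x i) else G j i (x i)) := by
    intro j
    show (∏ i, (L.foldr upd (G j)) i (x i)) = _
    refine Finset.prod_congr rfl fun i _ => ?_
    rw [foldr_upd_apply L hnd (G j) i]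
    by_cases h : i ∈ Lf
    · rw [if_pos ((hmemL i).mpr h), if_pos h]
    · rw [if_neg (fun hh => h ((hmemL i).mp hh)), if_neg h]
  show (∑ j ∈ Jset, P (L.foldr upd (G j)) x) = _
  rw [Finset.sum_congr rfl fun j _ => hP j]
  rw [hJset, Finset.sum_sigma]
  -- evaluation of the `none` terms
  have hnone : ∀ s ∈ pc,
      (∏ i, (if i ∈ Lf then deriv (G ⟨s, none⟩ i) (x i) else G ⟨s, none⟩ i (x i))) = 0 := by
    intro s hs
    have hcs : s.card = r := (Finset.mem_powersetCard.mp hs).2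
    have hns : ¬ (Lf ⊆ s) := fun h => by
      have := Finset.card_le_card h
      omega
    obtain ⟨i₀, hi₀L, hi₀s⟩ := Finset.not_subset.mp hns
    refine Finset.prod_eq_zero (Finset.mem_univ i₀) ?_
    rw [if_pos hi₀L]
    have : G ⟨s, none⟩ i₀ = fun _ => (1 : ℝ) := by
      show (if i₀ ∈ s then deriv (deriv (f i₀)) else fun _ => (1:ℝ)) = _
      rw [if_neg hi₀s]
    rw [this, deriv_const]
  -- evaluation of the `some m` terms
  have hsome : ∀ s ∈ pc, ∀ m ∈ Finset.univ \ s,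
      (∏ i, (if i ∈ Lf then deriv (G ⟨s, some m⟩ i) (x i) else G ⟨s, some m⟩ i (x i)))
        = if insert m s = Lf then
            (2 * deriv (f m) (x m) * deriv (deriv (f m)) (x m)) *
              ∏ i ∈ s, deriv (deriv (deriv (f i))) (x i)
          else 0 := by
    intro s hs m hm
    have hms : m ∉ s := (Finset.mem_sdiff.mp hm).2
    have hcs : s.card = r := (Finset.mem_powersetCard.mp hs).2
    have hcins : (insert m s).card = r + 1 := by rw [Finset.card_insert_of_notMem hms, hcs]
    have hGm : G ⟨s, some m⟩ m = fun t => (deriv (f m) t) ^ 2 := by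
      show (if m = m then (fun t => (deriv (f m) t) ^ 2)
          else if m ∈ s then deriv (deriv (f m)) else fun _ => 1) = _
      rw [if_pos rfl]
    have hGi : ∀ i, i ≠ m →
        G ⟨s, some m⟩ i = if i ∈ s then deriv (deriv (f i)) else fun _ => (1:ℝ) := by
      intro i hi
      show (if i = m then (fun t => (deriv (f m) t) ^ 2)
          else if i ∈ s then deriv (deriv (f i)) else fun _ => 1) = _
      rw [if_neg hi]
    by_cases heq : insert m s = Lf
    · rw [if_pos heq]
      have hmLf : m ∈ Lf := heq ▸ Finset.mem_insert_self m s
      rw [← Finset.mul_prod_erase Finset.univ _ (Finset.mem_univ m)]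
      have hfac : (if m ∈ Lf then deriv (G ⟨s, some m⟩ m) (x m) else G ⟨s, some m⟩ m (x m))
          = 2 * deriv (f m) (x m) * deriv (deriv (f m)) (x m) := by
        rw [if_pos hmLf, hGm]
        have h1 : HasDerivAt (deriv (f m)) (deriv (deriv (f m)) (x m)) (x m) :=
          (((hf1 m).differentiable (by simp)) (x m)).hasDerivAt
        have h2 := (h1.pow 2).deriv
        rw [show (fun t => deriv (f m) t ^ 2) = deriv (f m) ^ 2 from rfl, h2]
        push_cast
        ring
      rw [hfac]
      congr 1
      have hstep : ∀ i ∈ Finset.univ.erase m,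
          (if i ∈ Lf then deriv (G ⟨s, some m⟩ i) (x i) else G ⟨s, some m⟩ i (x i))
            = if i ∈ s then deriv (deriv (deriv (f i))) (x i) else 1 := by
        intro i hi
        have him : i ≠ m := Finset.ne_of_mem_erase hi
        have hiLf : i ∈ Lf ↔ i ∈ s := by
          rw [← heq, Finset.mem_insert]
          exact ⟨fun h => h.resolve_left him, Or.inr⟩
        by_cases h2 : i ∈ s
        · rw [if_pos (hiLf.mpr h2), if_pos h2, hGi i him, if_pos h2]
        · rw [if_neg (fun h => h2 (hiLf.mp h)), if_neg h2, hGi i him, if_neg h2]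
      rw [Finset.prod_congr rfl hstep, Finset.prod_ite_mem]
      congr 1
      rw [Finset.inter_eq_right]
      intro i hi
      exact Finset.mem_erase.mpr ⟨fun h => hms (h ▸ hi), Finset.mem_univ i⟩
    · rw [if_neg heq]
      have hnsub : ¬ (Lf ⊆ insert m s) := by
        intro hsub
        exact heq (Finset.eq_of_subset_of_card_le hsub (by omega)).symm
      obtain ⟨i₀, hi₀L, hi₀⟩ := Finset.not_subset.mp hnsub
      have hi₀m : i₀ ≠ m := fun h => hi₀ (h ▸ Finset.mem_insert_self m s)
      have hi₀s : i₀ ∉ s := fun h => hi₀ (Finset.mem_insert_of_mem h)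
      refine Finset.prod_eq_zero (Finset.mem_univ i₀) ?_
      rw [if_pos hi₀L, hGi i₀ hi₀m, if_neg hi₀s, deriv_const]
  -- assemble the double sum
  have key : ∀ s ∈ pc,
      (∑ o ∈ Finset.insertNone (Finset.univ \ s),
        ∏ i, (if i ∈ Lf then deriv (G ⟨s, o⟩ i) (x i) else G ⟨s, o⟩ i (x i)))
      = ∑ m ∈ Finset.univ, (if insert m s = Lf then
            (2 * deriv (f m) (x m) * deriv (deriv (f m)) (x m)) *
              ∏ i ∈ s, deriv (deriv (deriv (f i))) (x i)
          else 0) := by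
    intro s hs
    have hcs : s.card = r := (Finset.mem_powersetCard.mp hs).2
    rw [Finset.sum_insertNone, hnone s hs, zero_add, Finset.sum_congr rfl (hsome s hs)]
    refine Finset.sum_subset Finset.sdiff_subset fun m _ hm => ?_
    have hms : m ∈ s := by
      by_contra h
      exact hm (Finset.mem_sdiff.mpr ⟨Finset.mem_univ m, h⟩)
    rw [if_neg]
    intro h
    have : (insert m s).card = s.card := by rw [Finset.insert_eq_self.mpr hms]
    rw [h, hcardLf, hcs] at this
    omega
  rw [Finset.sum_congr rfl key, Finset.sum_comm]
  -- inner sum over s collapses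
  have inner : ∀ m : Fin n,
      (∑ s ∈ pc, (if insert m s = Lf then
            (2 * deriv (f m) (x m) * deriv (deriv (f m)) (x m)) *
              ∏ i ∈ s, deriv (deriv (deriv (f i))) (x i)
          else 0))
      = if m ∈ Lf then
          (2 * deriv (f m) (x m) * deriv (deriv (f m)) (x m)) *
            ∏ i ∈ Lf.erase m, deriv (deriv (deriv (f i))) (x i)
        else 0 := by
    intro m
    by_cases hm : m ∈ Lf
    · rw [if_pos hm]
      have hmem : Lf.erase m ∈ pc := by
        rw [hpc, Finset.mem_powersetCard]
        exact ⟨Finset.subset_univ _, by rw [Finset.card_erase_of_mem hm, hcardLf]; omega⟩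
      rw [Finset.sum_eq_single_of_mem (Lf.erase m) hmem ?h0]
      · rw [if_pos (Finset.insert_erase hm)]
      case h0 =>
        intro s hs hne
        have hcs : s.card = r := (Finset.mem_powersetCard.mp hs).2
        rw [if_neg]
        intro h
        have hms : m ∉ s := by
          intro hmss
          have : (insert m s).card = s.card := by rw [Finset.insert_eq_self.mpr hmss]
          rw [h, hcardLf, hcs] at this
          omega
        exact hne (by rw [← h, Finset.erase_insert hms])
    · rw [if_neg hm]
      refine Finset.sum_eq_zero fun s _ => ?_
      rw [if_neg]
      intro h
      exact hm (h ▸ Finset.mem_insert_self m s)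
  rw [Finset.sum_congr rfl fun m _ => inner m, Finset.sum_ite_mem, Finset.univ_inter]
  -- reindex over k : Fin (r+1)
  rw [hLfdef, Finset.sum_image (fun a _ b _ h => hl h), Finset.mul_sum]
  refine Finset.sum_congr rfl fun k _ => ?_
  have himg : (Finset.image l Finset.univ).erase (l k)
      = Finset.image l (Finset.univ.erase k) := (Finset.image_erase hl _ _).symm
  rw [himg, Finset.prod_image (fun a _ b _ h => hl h)]
  ring
end

section
/- Let W² = 1 + Σ_{k=1}^n f_k'(x_k)² for smooth one-variable functions f_k, and let r ∈ ℝ. For distinct indices i₁,…,i_m, the mixed partial derivative ∂^m(W^{r+2})/∂x_{i₁}⋯∂x_{i_m} = ∏_{j=1}^m (r+4−2j) · ∏_{k=1}^m f_{i_k}'(x_{i_k})·f_{i_k}''(x_{i_k}) · W^{r+2−2m}. -/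
private lemma S_pos {n : ℕ} (f : Fin n → ℝ → ℝ) (y : Fin n → ℝ) :
    0 < 1 + ∑ k, (deriv (f k) (y k)) ^ 2 := by positivity

private lemma S_update {n : ℕ} (f : Fin n → ℝ → ℝ) (x : Fin n → ℝ) (i : Fin n) (t : ℝ) :
    1 + ∑ k, (deriv (f k) (Function.update x i t k)) ^ 2
      = (1 + ∑ k ∈ Finset.univ.erase i, (deriv (f k) (x k)) ^ 2) + (deriv (f i) t) ^ 2 := by
  rw [← Finset.sum_erase_add _ _ (Finset.mem_univ i), Function.update_self, add_assoc]
  congr 2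
  exact Finset.sum_congr rfl fun k hk => by
    rw [Function.update_of_ne (Finset.ne_of_mem_erase hk)]

private lemma hasDerivAt_S {n : ℕ} (f : Fin n → ℝ → ℝ) (hf : ∀ i, ContDiff ℝ (⊤ : ℕ∞) (f i))
    (x : Fin n → ℝ) (i : Fin n) :
    HasDerivAt (fun t => 1 + ∑ k, (deriv (f k) (Function.update x i t k)) ^ 2)
      (2 * deriv (f i) (x i) * deriv (deriv (f i)) (x i)) (x i) := by
  have hsm : ContDiff ℝ ((⊤ : ℕ∞) : WithTop ℕ∞) (f i) := (hf i).of_le (by simp)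
  have h1 : HasDerivAt (deriv (f i)) (deriv (deriv (f i)) (x i)) (x i) :=
    ((contDiff_infty_iff_deriv.mp (contDiff_infty_iff_deriv.mp hsm).2).1 (x i)).hasDerivAt
  have h2 : HasDerivAt
      (fun t => (1 + ∑ k ∈ Finset.univ.erase i, (deriv (f k) (x k)) ^ 2) + (deriv (f i) t) ^ 2)
      (2 * deriv (f i) (x i) * deriv (deriv (f i)) (x i)) (x i) := by
    have := (h1.fun_pow 2).const_add (1 + ∑ k ∈ Finset.univ.erase i, (deriv (f k) (x k)) ^ 2)
    refine this.congr_deriv ?_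
    push_cast
    ring
  simpa only [← S_update f x i] using h2

private lemma key {n : ℕ} (f : Fin n → ℝ → ℝ) (hf : ∀ i, ContDiff ℝ (⊤ : ℕ∞) (f i)) (τ : ℝ) :
    ∀ (L : List (Fin n)), L.Nodup → ∀ x : Fin n → ℝ,
      (L.foldr pd (fun y => (1 + ∑ k, (deriv (f k) (y k)) ^ 2) ^ τ)) x
        = (∏ j ∈ Finset.range L.length, (2 * (τ - j))) *
          (L.map (fun k => deriv (f k) (x k) * deriv (deriv (f k)) (x k))).prod *
          (1 + ∑ k, (deriv (f k) (x k)) ^ 2) ^ (τ - L.length) := by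
  intro L
  induction L with
  | nil => intro _ x; simp
  | cons i L ih =>
    intro hnd x
    have hiL : i ∉ L := (List.nodup_cons.mp hnd).1
    have hL : L.Nodup := (List.nodup_cons.mp hnd).2
    have hfold : (L.foldr pd (fun y => (1 + ∑ k, (deriv (f k) (y k)) ^ 2) ^ τ))
        = fun y => (∏ j ∈ Finset.range L.length, (2 * (τ - j))) *
          (L.map (fun k => deriv (f k) (y k) * deriv (deriv (f k)) (y k))).prod *
          (1 + ∑ k, (deriv (f k) (y k)) ^ 2) ^ (τ - L.length) := funext (ih hL)
    show pd i _ x = _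
    rw [hfold]
    unfold pd
    have hconst : ∀ t : ℝ, (L.map (fun k => deriv (f k) (Function.update x i t k) *
        deriv (deriv (f k)) (Function.update x i t k))).prod
        = (L.map (fun k => deriv (f k) (x k) * deriv (deriv (f k)) (x k))).prod := by
      intro t
      congr 1
      exact List.map_congr_left fun k hk => by
        rw [Function.update_of_ne (ne_of_mem_of_not_mem hk hiL)]
    have hfun : (fun t => (∏ j ∈ Finset.range L.length, (2 * (τ - j))) *
          (L.map (fun k => deriv (f k) (Function.update x i t k) *
            deriv (deriv (f k)) (Function.update x i t k))).prod *
          (1 + ∑ k, (deriv (f k) (Function.update x i t k)) ^ 2) ^ (τ - L.length))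
        = fun t => ((∏ j ∈ Finset.range L.length, (2 * (τ - j))) *
          (L.map (fun k => deriv (f k) (x k) * deriv (deriv (f k)) (x k))).prod) *
          (1 + ∑ k, (deriv (f k) (Function.update x i t k)) ^ 2) ^ (τ - L.length) := by
      funext t
      rw [hconst t]
    rw [hfun]
    have hpos : (0:ℝ) < 1 + ∑ k, (deriv (f k) (x k)) ^ 2 := S_pos f x
    have hne : (1 + ∑ k, (deriv (f k) (Function.update x i (x i) k)) ^ 2) ≠ 0 := by
      rw [Function.update_eq_self]; exact hpos.ne'
    have hd := (hasDerivAt_S f hf x i).rpow_const (p := τ - L.length) (Or.inl hne)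
    have hd2 := hd.const_mul ((∏ j ∈ Finset.range L.length, (2 * (τ - j))) *
          (L.map (fun k => deriv (f k) (x k) * deriv (deriv (f k)) (x k))).prod)
    rw [hd2.deriv]
    simp only [Function.update_eq_self, List.map_cons, List.prod_cons, List.length_cons,
      Finset.prod_range_succ]
    push_cast
    rw [show τ - ((L.length : ℝ) + 1) = τ - L.length - 1 by ring]
    ring

private lemma sqrt_rpow_eq {a : ℝ} (ha : 0 ≤ a) (s : ℝ) :
    Real.sqrt a ^ s = a ^ (s / 2) := by
  rw [Real.sqrt_eq_rpow, ← Real.rpow_mul ha, one_div, inv_mul_eq_div]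

/-- Identity (d^dW^r): with `W = √(1 + Σ f_k'(x_k)²)`, for distinct indices `i₁,…,i_m`,
`∂^m(W^{r+2})/∂x_{i₁}⋯∂x_{i_m}
  = ∏_{j=1}^m (r+4−2j) · ∏_{k=1}^m f_{i_k}' f_{i_k}'' · W^{r+2−2m}`. -/
theorem mixed_partial_W_pow (n m : ℕ) (r : ℝ) (f : Fin n → ℝ → ℝ)
    (hf : ∀ i, ContDiff ℝ (⊤ : ℕ∞) (f i)) (l : Fin m → Fin n) (hl : Function.Injective l) :
    let W : (Fin n → ℝ) → ℝ := fun x => Real.sqrt (1 + ∑ k, (deriv (f k) (x k)) ^ 2)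
    ∀ x : Fin n → ℝ,
      ((List.ofFn l).foldr pd (fun y => W y ^ (r + 2))) x =
        (∏ j ∈ Finset.range m, (r + 4 - 2 * (j + 1 : ℕ))) *
          (∏ k : Fin m, deriv (f (l k)) (x (l k)) * deriv (deriv (f (l k))) (x (l k))) *
            W x ^ (r + 2 - 2 * m) := by
  intro W x
  show ((List.ofFn l).foldr pd
      (fun y => Real.sqrt (1 + ∑ k, (deriv (f k) (y k)) ^ 2) ^ (r + 2))) x = _
  have hW : (fun y : Fin n → ℝ => Real.sqrt (1 + ∑ k, (deriv (f k) (y k)) ^ 2) ^ (r + 2))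
      = fun y => (1 + ∑ k, (deriv (f k) (y k)) ^ 2) ^ ((r + 2) / 2) := by
    funext y
    exact sqrt_rpow_eq (S_pos f y).le (r + 2)
  rw [hW, key f hf ((r + 2) / 2) (List.ofFn l) (List.nodup_ofFn.mpr hl) x]
  simp only [List.length_ofFn, List.map_ofFn, List.prod_ofFn, Function.comp]
  show _ = _ * _ * Real.sqrt (1 + ∑ k, (deriv (f k) (x k)) ^ 2) ^ (r + 2 - 2 * m)
  rw [sqrt_rpow_eq (S_pos f x).le (r + 2 - 2 * m),
    show (r + 2 - 2 * m) / 2 = (r + 2) / 2 - m by ring]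
  congr 1
  congr 1
  exact Finset.prod_congr rfl fun j _ => by push_cast; ring
end

section
/- Let α_{k+1},…,αₙ be real numbers with n − k ≥ r + 2, and suppose that σ_r(α_{l₁},…,α_{l_{r+1}}) = 0 for every choice of r+1 distinct indices l₁,…,l_{r+1} in {k+1,…,n}. Then σ_r(α_{k+1},…,αₙ) = 0 and σ_{r+1}(α_{k+1},…,αₙ) = 0. -/
/-!
The identity `∑ i ∈ u, σ_k(u \ {i}) = (#u - k) σ_k(u)` propagates the vanishing of `σ_k` from all
`j`-sets (`k < j`) to every larger set; this gives `σ_r = 0`. For `σ_{r+1}` on an `(r+2)`-set `u`,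
Pascal's rule `σ_{r+1}(u) = σ_{r+1}(u \ {i}) + α_i σ_r(u \ {i})` and the hypothesis make
`σ_{r+1}(u \ {i}) = σ_{r+1}(u)` for every `i ∈ u`, so the identity reads `(r+2) σ_{r+1}(u) = σ_{r+1}(u)`.
Hence `σ_{r+1}` vanishes on all `(r+2)`-sets, and propagating once more gives `σ_{r+1} = 0`.
-/

/-- The `r`-th elementary symmetric polynomial of `v` restricted to a subset `t`. -/
noncomputable def esymmOn {n : ℕ} (r : ℕ) (t : Finset (Fin n)) (v : Fin n → ℝ) : ℝ :=
  ∑ s ∈ Finset.powersetCard r t, ∏ i ∈ s, v i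

section

open Finset

variable {n : ℕ} {v : Fin n → ℝ}

theorem esymmOn_succ_insert (k : ℕ) {t : Finset (Fin n)} {x : Fin n} (hx : x ∉ t) :
    esymmOn (k + 1) (insert x t) v = esymmOn (k + 1) t v + v x * esymmOn k t v := by
  have hxs : ∀ s ∈ t.powersetCard k, x ∉ s := fun s hs hxs =>
    hx ((mem_powersetCard.1 hs).1 hxs)
  have hdisj : Disjoint (t.powersetCard (k + 1)) ((t.powersetCard k).image (insert x)) :=
    disjoint_left.2 fun s hs hs' => by
      obtain ⟨s', -, rfl⟩ := mem_image.1 hs'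
      exact hx ((mem_powersetCard.1 hs).1 (mem_insert_self x s'))
  rw [esymmOn, powersetCard_succ_insert hx, sum_union hdisj,
    sum_image fun s₁ h₁ s₂ h₂ h => by
      rw [← erase_insert (hxs s₁ h₁), ← erase_insert (hxs s₂ h₂), h]]
  simp only [esymmOn, mul_sum]
  exact congrArg _ (sum_congr rfl fun s hs => prod_insert (hxs s hs))

/-- Each `k`-subset `s` of `u` survives in `u.erase i` for exactly the `#u - k` indices
`i ∈ u \ s`. -/
theorem sum_esymmOn_erase (k : ℕ) (u : Finset (Fin n)) :
    ∑ i ∈ u, esymmOn k (u.erase i) v = (#u - k : ℕ) * esymmOn k u v := by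
  have hfilter : ∀ i, (u.erase i).powersetCard k = {s ∈ u.powersetCard k | i ∉ s} := by
    intro i
    ext s
    simp only [mem_powersetCard, mem_filter, subset_erase]
    tauto
  simp only [esymmOn, hfilter, sum_filter, mul_sum]
  rw [sum_comm]
  refine sum_congr rfl fun s hs => ?_
  obtain ⟨hsu, hcard⟩ := mem_powersetCard.1 hs
  rw [← sum_filter, sum_const, filter_notMem_eq_sdiff, card_sdiff_of_subset hsu, hcard,
    nsmul_eq_mul]

theorem esymmOn_eq_zero_of_le_card {k j : ℕ} (hkj : k < j)
    (h : ∀ t : Finset (Fin n), #t = j → esymmOn k t v = 0) {u : Finset (Fin n)}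
    (hju : j ≤ #u) : esymmOn k u v = 0 := by
  suffices ∀ c, j ≤ c → ∀ u : Finset (Fin n), #u = c → esymmOn k u v = 0 from this _ hju _ rfl
  intro c hjc
  induction c, hjc using Nat.le_induction with
  | base => exact h
  | succ c hjc ih =>
    intro u hu
    have hsum : ∑ i ∈ u, esymmOn k (u.erase i) v = 0 :=
      sum_eq_zero fun i hi => ih _ (by rw [card_erase_of_mem hi, hu]; rfl)
    rw [sum_esymmOn_erase, hu] at hsum
    exact (mul_eq_zero.1 hsum).resolve_left (by norm_cast; omega)

theorem esymmOn_succ_eq_zero_of_card_eq {r : ℕ}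
    (h : ∀ t : Finset (Fin n), #t = r + 1 → esymmOn r t v = 0) {u : Finset (Fin n)}
    (hu : #u = r + 2) : esymmOn (r + 1) u v = 0 := by
  have herase : ∀ i ∈ u, esymmOn (r + 1) (u.erase i) v = esymmOn (r + 1) u v := by
    intro i hi
    have hcard : #(u.erase i) = r + 1 := by rw [card_erase_of_mem hi, hu]; rfl
    rw [← insert_erase hi, esymmOn_succ_insert r (notMem_erase i u), erase_insert (notMem_erase i u),
      h _ hcard, mul_zero, add_zero]
  have hsum := sum_esymmOn_erase (v := v) (r + 1) u
  rw [sum_congr rfl herase, sum_const, hu, show r + 2 - (r + 1) = 1 by omega, nsmul_eq_mul] at hsum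
  have : ((r + 1 : ℕ) : ℝ) * esymmOn (r + 1) u v = 0 := by push_cast at hsum ⊢; linarith
  exact (mul_eq_zero.1 this).resolve_left (by positivity)

end

/-- If `σ_r` vanishes on every `(r+1)`-subset of the `α`'s (with at least `r+2` of them),
then `σ_r` and `σ_{r+1}` vanish on the full tuple. -/
theorem esymm_subsets_vanish (m r : ℕ) (hm : r + 2 ≤ m) (a : Fin m → ℝ)
    (h : ∀ t : Finset (Fin m), t.card = r + 1 → esymmOn r t a = 0) :
    esymmOn r Finset.univ a = 0 ∧ esymmOn (r + 1) Finset.univ a = 0 := by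
  have hcard : Finset.univ.card = m := Finset.card_fin m
  exact ⟨esymmOn_eq_zero_of_le_card (Nat.lt_succ_self r) h (by omega),
    esymmOn_eq_zero_of_le_card (Nat.lt_succ_self (r + 1))
      (fun _ => esymmOn_succ_eq_zero_of_card_eq h) (by omega)⟩
end
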